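/- arXiv:1901.07781 — 5 statements merged into one kernel-verified Lean document; each statement's English description precedes it below -/
import Mathlib

section
/- For all real numbers c, k and every function f in the little Bloch space B_{∞,0}, the Bloch norm of T_t f − f tends to 0 as t → 0, i.e. lim_{t→0} ( |(T_t f)(0) − f(0)| + sup_{z ∈ D} (1 − |z|²)|(T_t f)′(z) − f′(z)| ) = 0; that is, the group (T_t) is strongly continuous on B_{∞,0}. -/
open Complex Metric Filter Topology

/-- The Bloch seminorm terms: the set `{(1-|z|²)|f'(z)| : z ∈ D}`. -/
def blochSet (f : ℂ → ℂ) : Set ℝ :=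
  (fun z : ℂ => (1 - ‖z‖ ^ 2) * ‖deriv f z‖) '' (ball (0:ℂ) 1)

/-- `(1-|z|²)|f'(z)| → 0` as `|z| → 1⁻`. -/
def LittleBlochDecay (f : ℂ → ℂ) : Prop :=
  Tendsto (fun z : ℂ => (1 - ‖z‖ ^ 2) * ‖deriv f z‖)
    (comap (fun z : ℂ => ‖z‖) (𝓝[<] (1:ℝ))) (𝓝 0)

/-- Membership in the little Bloch space `B_{∞,0}`. -/
def MemLittleBloch (f : ℂ → ℂ) : Prop :=
  DifferentiableOn ℂ f (ball (0:ℂ) 1) ∧ BddAbove (blochSet f) ∧ LittleBlochDecay f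

/-- The weighted composition operator `T_t f(z) = e^{ict} f(e^{ikt} z)`. -/
noncomputable def T (c k t : ℝ) (f : ℂ → ℂ) : ℂ → ℂ :=
  fun z => Complex.exp (I * c * t) * f (Complex.exp (I * k * t) * z)


lemma abs_exp_I_mul (a t : ℝ) : ‖Complex.exp (I * a * t)‖ = 1 := by
  have : I * a * t = (↑(a * t) : ℂ) * I := by push_cast; ring
  rw [this, Complex.norm_exp_ofReal_mul_I]

lemma deriv_T_eq (c k t : ℝ) {f : ℂ → ℂ} (hf : DifferentiableOn ℂ f (ball (0:ℂ) 1))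
    {z : ℂ} (hz : z ∈ ball (0:ℂ) 1) :
    deriv (T c k t f) z =
      Complex.exp (I * c * t) *
        (Complex.exp (I * k * t) * deriv f (Complex.exp (I * k * t) * z)) := by
  have hw : Complex.exp (I * k * t) * z ∈ ball (0:ℂ) 1 := by
    rw [mem_ball_zero_iff] at hz ⊢
    rw [norm_mul]
    simpa [abs_exp_I_mul] using hz
  have hfd : HasDerivAt f (deriv f (Complex.exp (I*k*t) * z)) (Complex.exp (I*k*t) * z) :=
    (hf.differentiableAt (isOpen_ball.mem_nhds hw)).hasDerivAt
  have h1 : HasDerivAt (fun z : ℂ => Complex.exp (I*k*t) * z) (Complex.exp (I*k*t)) z := by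
    simpa using (hasDerivAt_id z).const_mul (Complex.exp (I*k*t))
  have h2 : HasDerivAt (fun z : ℂ => f (Complex.exp (I*k*t) * z))
      (deriv f (Complex.exp (I*k*t) * z) * Complex.exp (I*k*t)) z := by
    exact hfd.comp z h1
  have h3 := h2.const_mul (Complex.exp (I*c*t))
  have : deriv (T c k t f) z =
      Complex.exp (I*c*t) * (deriv f (Complex.exp (I*k*t) * z) * Complex.exp (I*k*t)) :=
    h3.deriv
  rw [this]; ring

theorem T_aux (c k : ℝ) (f : ℂ → ℂ)
    (hdiff : DifferentiableOn ℂ f (ball (0:ℂ) 1))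
    (hdecay : Tendsto (fun z : ℂ => (1 - ‖z‖ ^ 2) * ‖deriv f z‖)
      (comap (fun z : ℂ => ‖z‖) (𝓝[<] (1:ℝ))) (𝓝 0)) :
    Tendsto (fun t : ℝ =>
        ‖T c k t f 0 - f 0‖ +
          sSup ((fun z : ℂ =>
            (1 - ‖z‖ ^ 2) * ‖deriv (T c k t f) z - deriv f z‖) ''
              (ball (0:ℂ) 1)))
      (𝓝 0) (𝓝 0) := by
  have han : AnalyticOnNhd ℂ (deriv f) (ball (0:ℂ) 1) :=
    (hdiff.analyticOnNhd isOpen_ball).deriv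
  -- first term
  have h1 : Tendsto (fun t : ℝ => ‖T c k t f 0 - f 0‖) (𝓝 0) (𝓝 0) := by
    have hc : Continuous fun t : ℝ => ‖Complex.exp (I*c*t) * f 0 - f 0‖ :=
      continuous_norm.comp (by fun_prop)
    have := hc.tendsto' 0 0 (by simp)
    simpa [T] using this
  -- key uniform estimate
  have key : ∀ ε > (0:ℝ), ∀ᶠ t : ℝ in 𝓝 0, ∀ z ∈ ball (0:ℂ) 1,
      (1 - ‖z‖ ^ 2) * ‖deriv (T c k t f) z - deriv f z‖ ≤ ε := by
    intro ε hε
    -- get radius from decay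
    have hmem := hdecay (Iio_mem_nhds (show (0:ℝ) < ε/4 by linarith))
    rw [mem_map, mem_comap] at hmem
    obtain ⟨s, hs, hsub⟩ := hmem
    obtain ⟨l, hl, hIoo⟩ := mem_nhdsLT_iff_exists_Ioo_subset.1 hs
    have hl1 : l < 1 := hl
    have hdec : ∀ z : ℂ, l < ‖z‖ → ‖z‖ < 1 →
        (1 - ‖z‖ ^ 2) * ‖deriv f z‖ < ε/4 := by
      intro z h1z h2z
      exact hsub (hIoo ⟨h1z, h2z⟩)
    set r : ℝ := max l 0 with hr
    have hr1 : r < 1 := max_lt hl1 one_pos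
    have hr0 : 0 ≤ r := le_max_right _ _
    set s0 : ℝ := (r + 1) / 2 with hs0
    have hrs0 : r < s0 := by rw [hs0]; linarith
    have hs01 : s0 < 1 := by rw [hs0]; linarith
    -- tube lemma on the compact ball
    have ht1 : ∀ᶠ t : ℝ in 𝓝 0, ∀ z ∈ closedBall (0:ℂ) s0,
        ‖Complex.exp (I*c*t) *
          (Complex.exp (I*k*t) * deriv f (Complex.exp (I*k*t) * z)) - deriv f z‖ < ε := by
      apply (isCompact_closedBall (0:ℂ) s0).eventually_forall_of_forall_eventually
      intro z hz
      have hzb : z ∈ ball (0:ℂ) 1 := by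
        rw [mem_closedBall_zero_iff] at hz
        rw [mem_ball_zero_iff]
        exact lt_of_le_of_lt hz hs01
      have hdc : ContinuousAt (deriv f) z := (han z hzb).continuousAt
      have hinner : Continuous fun p : ℝ × ℂ => Complex.exp (I*k*p.1) * p.2 := by fun_prop
      have hG : ContinuousAt (fun p : ℝ × ℂ =>
          ‖Complex.exp (I*c*p.1) *
            (Complex.exp (I*k*p.1) * deriv f (Complex.exp (I*k*p.1) * p.2)) - deriv f p.2‖)
          (0, z) := by
        have hcomp : ContinuousAt (fun p : ℝ × ℂ => deriv f (Complex.exp (I*k*p.1) * p.2)) (0, z) :=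
          ContinuousAt.comp (x := ((0:ℝ), z)) (g := deriv f) (by simpa using hdc)
            hinner.continuousAt
        have hcomp2 : ContinuousAt (fun p : ℝ × ℂ => deriv f p.2) (0, z) :=
          ContinuousAt.comp (x := ((0:ℝ), z)) (g := deriv f) hdc continuous_snd.continuousAt
        exact continuous_norm.continuousAt.comp <|
          (((Complex.continuous_exp.comp (by fun_prop : Continuous fun p : ℝ × ℂ => I*c*p.1)).continuousAt.mul
            ((Complex.continuous_exp.comp (by fun_prop : Continuous fun p : ℝ × ℂ => I*k*p.1)).continuousAt.mul
              hcomp)).sub hcomp2)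
      exact hG (Iio_mem_nhds (by simpa using hε))
    filter_upwards [ht1] with t ht
    intro z hz
    rw [deriv_T_eq c k t hdiff hz]
    have hz1 : ‖z‖ < 1 := by rwa [mem_ball_zero_iff] at hz
    have hz2 : (0:ℝ) ≤ 1 - ‖z‖ ^ 2 := by nlinarith [norm_nonneg z]
    rcases le_or_gt (‖z‖) r with hcase | hcase
    · -- small z : use uniform continuity estimate
      have hzK : z ∈ closedBall (0:ℂ) s0 := by
        rw [mem_closedBall_zero_iff]
        exact hcase.trans hrs0.le
      have := (ht z hzK).le
      calc (1 - ‖z‖ ^ 2) * ‖_‖ ≤ 1 * ‖_‖ := by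
            apply mul_le_mul_of_nonneg_right _ (norm_nonneg _)
            nlinarith [norm_nonneg z]
        _ ≤ ε := by rw [one_mul]; exact this
    · -- big z : use decay
      set w : ℂ := Complex.exp (I*k*t) * z with hw
      have hwabs : ‖w‖ = ‖z‖ := by
        rw [hw, norm_mul, abs_exp_I_mul, one_mul]
      have hlz : l < ‖z‖ := lt_of_le_of_lt (le_max_left _ _) hcase
      have hdw : (1 - ‖w‖ ^ 2) * ‖deriv f w‖ < ε/4 := by
        apply hdec <;> rw [hwabs] <;> [exact hlz; exact hz1]
      have hdz : (1 - ‖z‖ ^ 2) * ‖deriv f z‖ < ε/4 := hdec z hlz hz1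
      have htri : ‖Complex.exp (I*c*t) * (Complex.exp (I*k*t) * deriv f w) - deriv f z‖
          ≤ ‖deriv f w‖ + ‖deriv f z‖ := by
        calc ‖_‖ ≤ ‖Complex.exp (I*c*t) * (Complex.exp (I*k*t) * deriv f w)‖
              + ‖deriv f z‖ := norm_sub_le _ _
          _ = ‖deriv f w‖ + ‖deriv f z‖ := by
              rw [norm_mul, norm_mul, abs_exp_I_mul, abs_exp_I_mul]; ring
      calc (1 - ‖z‖ ^ 2) * ‖_‖
          ≤ (1 - ‖z‖ ^ 2) * (‖deriv f w‖ + ‖deriv f z‖) :=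
            mul_le_mul_of_nonneg_left htri hz2
        _ = (1 - ‖w‖ ^ 2) * ‖deriv f w‖
            + (1 - ‖z‖ ^ 2) * ‖deriv f z‖ := by rw [hwabs]; ring
        _ ≤ ε := by linarith
  -- second term tendsto
  have h2 : Tendsto (fun t : ℝ =>
      sSup ((fun z : ℂ =>
        (1 - ‖z‖ ^ 2) * ‖deriv (T c k t f) z - deriv f z‖) ''
          (ball (0:ℂ) 1))) (𝓝 0) (𝓝 0) := by
    rw [tendsto_order]
    constructor
    · intro a ha
      filter_upwards with t
      refine lt_of_lt_of_le ha (Real.sSup_nonneg ?_)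
      rintro x ⟨z, hz, rfl⟩
      have hz1 : ‖z‖ < 1 := by rwa [mem_ball_zero_iff] at hz
      have : (0:ℝ) ≤ 1 - ‖z‖ ^ 2 := by nlinarith [norm_nonneg z]
      positivity
    · intro a ha
      filter_upwards [key (a/2) (by linarith)] with t ht
      have hle : sSup ((fun z : ℂ =>
          (1 - ‖z‖ ^ 2) * ‖deriv (T c k t f) z - deriv f z‖) ''
            (ball (0:ℂ) 1)) ≤ a/2 := by
        apply Real.sSup_le _ (by linarith)
        rintro x ⟨z, hz, rfl⟩
        exact ht z hz
      linarith
  simpa using h1.add h2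

/-- Strong continuity of the group `(T_t)` on the little Bloch space:
`‖T_t f − f‖_B → 0` as `t → 0`. -/
theorem T_strongly_continuous (c k : ℝ) (f : ℂ → ℂ) (hf : MemLittleBloch f) :
    Tendsto (fun t : ℝ =>
        ‖T c k t f 0 - f 0‖ +
          sSup ((fun z : ℂ =>
            (1 - ‖z‖ ^ 2) * ‖deriv (T c k t f) z - deriv f z‖) ''
              (ball (0:ℂ) 1)))
      (𝓝 0) (𝓝 0) :=
  T_aux c k f hf.1 hf.2.2
end

section
/- Let m ≥ 1 be an integer and let f belong to the little Bloch space B_{∞,0}. Then the derivatives f^{(k)}(0) vanish for all 0 ≤ k < m if and only if there exists g ∈ B_{∞,0} such that f(z) = z^m g(z) for all z in the open unit disc D; that is, M_z^m B_{∞,0} = { f ∈ B_{∞,0} : f^{(k)}(0) = 0 for all k < m }. -/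
open Complex Metric Filter Topology

lemma analyticAt_deriv {g : ℂ → ℂ} {x : ℂ} (h : AnalyticAt ℂ g x) : AnalyticAt ℂ (deriv g) x := by
  obtain ⟨r, hr, hg⟩ := h.exists_ball_analyticOnNhd
  exact hg.deriv x (mem_ball_self hr)

lemma iter_pow_mul (m : ℕ) : ∀ g : ℂ → ℂ, AnalyticAt ℂ g 0 →
    (∀ k < m, iteratedDeriv k (fun z => z ^ m * g z) 0 = 0) ∧
      iteratedDeriv m (fun z => z ^ m * g z) 0 = (m.factorial : ℂ) * g 0 := by
  induction m with
  | zero =>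
    intro g hg
    exact ⟨fun k hk => absurd hk (Nat.not_lt_zero k), by simp⟩
  | succ m ih =>
    intro g hg
    set h : ℂ → ℂ := fun z => (m + 1 : ℂ) * g z + z * deriv g z with hh
    have hha : AnalyticAt ℂ h 0 :=
      ((analyticAt_const).mul hg).add ((analyticAt_id).mul (analyticAt_deriv hg))
    have hev : deriv (fun z => z ^ (m + 1) * g z) =ᶠ[𝓝 (0:ℂ)] fun z => z ^ m * h z := by
      filter_upwards [hg.eventually_analyticAt] with z hz
      have hd : HasDerivAt (fun w : ℂ => w ^ (m + 1) * g w)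
          ((m + 1 : ℕ) * z ^ m * g z + z ^ (m + 1) * deriv g z) z := by
        exact ((hasDerivAt_pow (m + 1) z).mul hz.differentiableAt.hasDerivAt).congr_deriv (by simp)
      rw [hd.deriv, hh]
      push_cast
      ring
    have key : ∀ k ≤ m, iteratedDeriv (k + 1) (fun z => z ^ (m + 1) * g z) 0 =
        iteratedDeriv k (fun z => z ^ m * h z) 0 := by
      intro k _
      rw [iteratedDeriv_succ', hev.iteratedDeriv_eq k]
    refine ⟨?_, ?_⟩
    · intro k hk
      match k with
      | 0 => simp
      | k + 1 =>
        rw [key k (by omega)]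
        exact (ih h hha).1 k (by omega)
    · rw [key m le_rfl, (ih h hha).2]
      have : h 0 = (m + 1 : ℂ) * g 0 := by simp [hh]
      rw [this, Nat.factorial_succ]
      push_cast
      ring

lemma factor (m : ℕ) : ∀ f : ℂ → ℂ, DifferentiableOn ℂ f (ball (0:ℂ) 1) →
    (∀ k < m, iteratedDeriv k f 0 = 0) →
    ∃ g : ℂ → ℂ, DifferentiableOn ℂ g (ball (0:ℂ) 1) ∧
      ∀ z ∈ ball (0:ℂ) 1, f z = z ^ m * g z := by
  induction m with
  | zero => exact fun f hf _ => ⟨f, hf, fun z _ => by simp⟩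
  | succ m ih =>
    intro f hf hv
    obtain ⟨g, hg, hfg⟩ := ih f hf (fun k hk => hv k (by omega))
    have hball : ball (0:ℂ) 1 ∈ 𝓝 (0:ℂ) := ball_mem_nhds _ one_pos
    have hga : AnalyticAt ℂ g 0 :=
      (hg.analyticOnNhd isOpen_ball) 0 (mem_ball_self one_pos)
    have hfe : f =ᶠ[𝓝 (0:ℂ)] fun z => z ^ m * g z := eventually_of_mem hball hfg
    have hg0 : g 0 = 0 := by
      have h1 := hv m (by omega)
      rw [hfe.iteratedDeriv_eq m, (iter_pow_mul m g hga).2] at h1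
      have : (m.factorial : ℂ) ≠ 0 := Nat.cast_ne_zero.2 m.factorial_ne_zero
      exact (mul_eq_zero.1 h1).resolve_left this
    set g1 : ℂ → ℂ := fun z => if z = 0 then deriv g 0 else g z / z with hg1
    have hdiff_ne : ∀ z ∈ ball (0:ℂ) 1, z ≠ 0 → DifferentiableAt ℂ g1 z := by
      intro z hz hz0
      have hev : (fun w => g w / w) =ᶠ[𝓝 z] g1 := by
        filter_upwards [compl_singleton_mem_nhds hz0] with w hw
        have hw0 : w ≠ 0 := hw
        simp [hg1, if_neg hw0]
      refine hev.differentiableAt_iff.1 ?_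
      exact ((hg.differentiableAt (isOpen_ball.mem_nhds hz)).div differentiableAt_id hz0)
    have hcont : ContinuousAt g1 0 := by
      rw [← continuousWithinAt_compl_self]
      have hda : HasDerivAt g (deriv g 0) 0 := (hg.differentiableAt hball).hasDerivAt
      have hslope := hasDerivAt_iff_tendsto_slope.1 hda
      have : ∀ᶠ z in 𝓝[≠] (0:ℂ), slope g 0 z = g1 z := by
        filter_upwards [self_mem_nhdsWithin] with z hz
        have hz0 : (z:ℂ) ≠ 0 := hz
        simp [slope, hg0, hg1, if_neg hz0, div_eq_inv_mul]
      have h2 : Tendsto g1 (𝓝[≠] (0:ℂ)) (𝓝 (deriv g 0)) := hslope.congr' this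
      simpa [ContinuousWithinAt, hg1] using h2
    have hd0 : DifferentiableAt ℂ g1 0 := by
      refine (Complex.analyticAt_of_differentiable_on_punctured_nhds_of_continuousAt ?_
        hcont).differentiableAt
      filter_upwards [self_mem_nhdsWithin, nhdsWithin_le_nhds hball] with z hz hz'
      exact hdiff_ne z hz' hz
    refine ⟨g1, ?_, ?_⟩
    · intro z hz
      rcases eq_or_ne z 0 with rfl | hz0
      · exact hd0.differentiableWithinAt
      · exact (hdiff_ne z hz hz0).differentiableWithinAt
    · intro z hz
      rcases eq_or_ne z 0 with rfl | hz0
      · have : f 0 = 0 := by simpa using hv 0 (by omega)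
        simp [this]
      · have : g1 z = g z / z := if_neg hz0
        rw [hfg z hz, this, pow_succ]
        field_simp

lemma growth_bound {f : ℂ → ℂ} (hf : DifferentiableOn ℂ f (ball (0:ℂ) 1)) {M : ℝ}
    (hM : ∀ w ∈ ball (0:ℂ) 1, (1 - ‖w‖ ^ 2) * ‖(deriv f w)‖ ≤ M)
    {z : ℂ} (hz : z ∈ ball (0:ℂ) 1) :
    ‖(f z)‖ ≤ ‖(f 0)‖ + M * (-Real.log (1 - ‖z‖)) := by
  have hM0 : 0 ≤ M := by
    have h0 := hM 0 (mem_ball_self one_pos)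
    simp at h0
    exact le_trans (norm_nonneg _) h0
  set r : ℝ := ‖z‖ with hr
  have hr0 : 0 ≤ r := norm_nonneg z
  have hr1 : r < 1 := by simpa [hr] using mem_ball_zero_iff.1 hz
  have hmem : ∀ t : ℝ, t ∈ Set.Icc (0:ℝ) 1 → (t:ℂ) * z ∈ ball (0:ℂ) 1 := by
    intro t ht
    rw [mem_ball_zero_iff]
    calc ‖((t:ℂ) * z)‖ = |t| * r := by simp [hr]
    _ ≤ 1 * r := by
        apply mul_le_mul_of_nonneg_right _ hr0
        rw [_root_.abs_of_nonneg ht.1]; exact ht.2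
    _ < 1 := by linarith
  set u' : ℝ → ℂ := fun t => deriv f ((t:ℂ) * z) * z with hu'
  have hderiv : ∀ t ∈ Set.uIcc (0:ℝ) 1, HasDerivAt (fun s : ℝ => f ((s:ℂ) * z)) (u' t) t := by
    intro t ht
    rw [Set.uIcc_of_le zero_le_one] at ht
    have h1 : HasDerivAt (fun w : ℂ => w * z) z ((t:ℂ)) := by
      simpa using (hasDerivAt_id ((t:ℂ))).mul_const z
    have h2 : HasDerivAt f (deriv f ((t:ℂ) * z)) ((t:ℂ) * z) :=
      (hf.differentiableAt (isOpen_ball.mem_nhds (hmem t ht))).hasDerivAt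
    have h3 := (HasDerivAt.comp ((t:ℂ)) h2 h1).comp_ofReal
    simpa [Function.comp, hu'] using h3
  have hderivcont : ContinuousOn (deriv f) (ball (0:ℂ) 1) :=
    ((hf.analyticOnNhd isOpen_ball).deriv).continuousOn
  have hcont : ContinuousOn u' (Set.uIcc (0:ℝ) 1) := by
    rw [Set.uIcc_of_le zero_le_one]
    apply ContinuousOn.mul _ continuousOn_const
    exact hderivcont.comp (Continuous.continuousOn (by continuity)) hmem
  have hint : IntervalIntegrable u' MeasureTheory.volume 0 1 := hcont.intervalIntegrable
  have hftc : ∫ t in (0:ℝ)..1, u' t = f z - f 0 := by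
    have := intervalIntegral.integral_eq_sub_of_hasDerivAt hderiv hint
    simpa using this
  set φ : ℝ → ℝ := fun t => M * r / (1 - t * r) with hφ
  have hpos : ∀ t ∈ Set.Icc (0:ℝ) 1, 0 < 1 - t * r := by
    intro t ht
    have : t * r ≤ 1 * r := mul_le_mul_of_nonneg_right ht.2 hr0
    nlinarith
  have hφderiv : ∀ t ∈ Set.uIcc (0:ℝ) 1,
      HasDerivAt (fun s : ℝ => -M * Real.log (1 - s * r)) (φ t) t := by
    intro t ht
    rw [Set.uIcc_of_le zero_le_one] at ht
    have h1 : HasDerivAt (fun s : ℝ => 1 - s * r) (-r) t := by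
      simpa using ((hasDerivAt_id t).mul_const r).const_sub 1
    have h2 := (h1.log (ne_of_gt (hpos t ht))).const_mul (-M)
    exact h2.congr_deriv (by show _ = M * r / (1 - t * r); ring)
  have hφcont : ContinuousOn φ (Set.uIcc (0:ℝ) 1) := by
    rw [Set.uIcc_of_le zero_le_one]
    exact continuousOn_const.div (by fun_prop) (fun t ht => ne_of_gt (hpos t ht))
  have hφint : IntervalIntegrable φ MeasureTheory.volume 0 1 := hφcont.intervalIntegrable
  have hφftc : ∫ t in (0:ℝ)..1, φ t = -M * Real.log (1 - r) := by
    have := intervalIntegral.integral_eq_sub_of_hasDerivAt hφderiv hφint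
    simpa using this
  have hbound : ∀ t ∈ Set.Icc (0:ℝ) 1, ‖u' t‖ ≤ φ t := by
    intro t ht
    have habs : ‖((t:ℂ) * z)‖ = t * r := by
      rw [norm_mul, Complex.norm_real, Real.norm_eq_abs, _root_.abs_of_nonneg ht.1]
    have h1 := hM _ (hmem t ht)
    rw [habs] at h1
    have h2 : 0 < 1 - (t * r) ^ 2 := by
      have := hpos t ht
      have htr : 0 ≤ t * r := mul_nonneg ht.1 hr0
      nlinarith
    have h3 : ‖(deriv f ((t:ℂ) * z))‖ ≤ M / (1 - (t * r) ^ 2) := by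
      rw [le_div_iff₀ h2]; linarith [h1]
    calc ‖u' t‖ = ‖(deriv f ((t:ℂ) * z))‖ * r := by simp [hu', hr]
    _ ≤ M / (1 - (t * r) ^ 2) * r := mul_le_mul_of_nonneg_right h3 hr0
    _ ≤ M / (1 - t * r) * r := by
        apply mul_le_mul_of_nonneg_right _ hr0
        apply div_le_div_of_nonneg_left hM0 (hpos t ht)
        have htr : 0 ≤ t * r := mul_nonneg ht.1 hr0
        nlinarith
    _ = φ t := by rw [hφ]; ring
  have hnorm : ‖∫ t in (0:ℝ)..1, u' t‖ ≤ |∫ t in (0:ℝ)..1, φ t| := by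
    apply intervalIntegral.norm_integral_le_abs_of_norm_le _ hφint
    rw [MeasureTheory.ae_restrict_iff' measurableSet_uIoc]
    apply MeasureTheory.ae_of_all
    intro t ht
    apply hbound
    rw [Set.uIoc_of_le zero_le_one] at ht
    exact ⟨le_of_lt ht.1, ht.2⟩
  rw [hftc, hφftc] at hnorm
  have hlog : Real.log (1 - r) ≤ 0 := Real.log_nonpos (by linarith) (by linarith)
  have habs2 : |(-M * Real.log (1 - r))| = M * (-Real.log (1 - r)) := by
    rw [_root_.abs_of_nonneg (by nlinarith)]; ring
  rw [habs2] at hnorm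
  have h4 : ‖f z‖ - ‖f 0‖ ≤ ‖f z - f 0‖ := norm_sub_norm_le _ _
  linarith

lemma log_sqrt_bound {x : ℝ} (hx : 0 < x) : x * (-Real.log x) ≤ 2 * Real.sqrt x := by
  have hs : 0 < Real.sqrt x := Real.sqrt_pos.2 hx
  have h1 : 1 - (Real.sqrt x)⁻¹ ≤ Real.log (Real.sqrt x) :=
    Real.one_sub_inv_le_log_of_pos hs
  have h2 : Real.log (Real.sqrt x) = Real.log x / 2 := Real.log_sqrt hx.le
  have h3 : x / Real.sqrt x = Real.sqrt x := Real.div_sqrt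
  have h4 : -Real.log x ≤ 2 * ((Real.sqrt x)⁻¹ - 1) := by
    rw [h2] at h1; linarith
  have h5 : x * (-Real.log x) ≤ x * (2 * ((Real.sqrt x)⁻¹ - 1)) :=
    mul_le_mul_of_nonneg_left h4 hx.le
  have h6 : x * (Real.sqrt x)⁻¹ = Real.sqrt x := by
    rw [← div_eq_mul_inv]; exact h3
  nlinarith [hs.le]

lemma deriv_estimate {f g : ℂ → ℂ} (n : ℕ) (hf : DifferentiableOn ℂ f (ball (0:ℂ) 1))
    (heq : ∀ w ∈ ball (0:ℂ) 1, f w = w ^ (n + 1) * g w) {z : ℂ} (hz : z ∈ ball (0:ℂ) 1)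
    (hz0 : z ≠ 0) :
    ‖(deriv g z)‖ ≤ ‖(deriv f z)‖ / ‖z‖ ^ (n + 1)
      + (n + 1) * ‖(f z)‖ / ‖z‖ ^ (n + 2) := by
  have hev : g =ᶠ[𝓝 z] fun w => f w / w ^ (n + 1) := by
    have hs : (ball (0:ℂ) 1 ∩ {(0:ℂ)}ᶜ) ∈ 𝓝 z :=
      Filter.inter_mem (isOpen_ball.mem_nhds hz) (compl_singleton_mem_nhds hz0)
    filter_upwards [hs] with w hw
    have hw0 : w ≠ 0 := hw.2
    rw [heq w hw.1]
    field_simp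
  rw [hev.deriv_eq]
  have hfd : HasDerivAt f (deriv f z) z :=
    (hf.differentiableAt (isOpen_ball.mem_nhds hz)).hasDerivAt
  have hpd : HasDerivAt (fun w : ℂ => w ^ (n + 1)) ((n + 1 : ℕ) * z ^ n) z := by
    simpa using hasDerivAt_pow (n + 1) z
  have hd := hfd.div hpd (pow_ne_zero (n + 1) hz0)
  rw [(show HasDerivAt (fun w => f w / w ^ (n + 1)) _ z from hd).deriv]
  set r : ℝ := ‖z‖ with hr
  have hr0 : 0 < r := by simpa [hr] using (norm_pos_iff.mpr hz0)
  have hnum : ‖(deriv f z * z ^ (n + 1) - f z * ((n + 1 : ℕ) * z ^ n))‖ ≤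
      ‖(deriv f z)‖ * r ^ (n + 1) + (n + 1) * ‖(f z)‖ * r ^ n := by
    refine le_trans (norm_sub_le _ _) (le_of_eq ?_)
    simp only [norm_mul, norm_pow, Complex.norm_natCast, ← hr]
    push_cast
    ring
  rw [norm_div, norm_pow, norm_pow]
  have key : (‖(deriv f z)‖ * r ^ (n + 1) + (n + 1) * ‖(f z)‖ * r ^ n) /
      ((r ^ (n + 1)) ^ 2) = ‖(deriv f z)‖ / r ^ (n + 1)
        + (n + 1) * ‖(f z)‖ / r ^ (n + 2) := by
    field_simp
    ring
  rw [← key]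
  gcongr

/-- `M_z^m B_{∞,0} = {f ∈ B_{∞,0} : f^{(k)}(0) = 0 for all k < m}`. -/
theorem range_Mz_pow (m : ℕ) (hm : 1 ≤ m) (f : ℂ → ℂ) (hf : MemLittleBloch f) :
    (∀ k < m, iteratedDeriv k f 0 = 0) ↔
      ∃ g : ℂ → ℂ, MemLittleBloch g ∧ ∀ z ∈ ball (0:ℂ) 1, f z = z ^ m * g z := by
  obtain ⟨n, rfl⟩ : ∃ n, m = n + 1 := ⟨m - 1, by omega⟩
  constructor
  · intro hv
    obtain ⟨g, hgd, heq⟩ := factor (n + 1) f hf.1 hv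
    obtain ⟨M, hMub⟩ := hf.2.1
    have hM : ∀ w ∈ ball (0:ℂ) 1, (1 - ‖w‖ ^ 2) * ‖(deriv f w)‖ ≤ M :=
      fun w hw => hMub ⟨w, hw, rfl⟩
    have hM0 : 0 ≤ M := by
      have h0 := hM 0 (mem_ball_self one_pos)
      simp at h0
      exact le_trans (norm_nonneg _) h0
    set C := ‖(f 0)‖ with hCdef
    have hC0 : 0 ≤ C := norm_nonneg _
    -- key pointwise estimate on the outer region
    have hkey : ∀ z ∈ ball (0:ℂ) 1, 1/2 ≤ ‖z‖ →
        (1 - ‖z‖ ^ 2) * ‖(deriv g z)‖ ≤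
        2 ^ (n+1) * ((1 - ‖z‖ ^ 2) * ‖(deriv f z)‖)
          + ((n:ℝ)+1) * 2 ^ (n+2) * (2 * (1 - ‖z‖) * C
              + 4 * M * Real.sqrt (1 - ‖z‖)) := by
      intro z hz hhalf
      set r := ‖z‖ with hr
      have hr1 : r < 1 := by simpa [hr] using mem_ball_zero_iff.1 hz
      have hrpos : 0 < r := lt_of_lt_of_le (by norm_num) hhalf
      have hz0 : z ≠ 0 := norm_pos_iff.mp hrpos
      have hs0 : 0 ≤ 1 - r ^ 2 := by nlinarith
      have hde := deriv_estimate n hf.1 heq hz hz0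
      rw [← hr] at hde
      have hgrow := growth_bound hf.1 hM hz
      rw [← hCdef, ← hr] at hgrow
      have hL0 : 0 ≤ -Real.log (1 - r) := by
        have := Real.log_nonpos (by linarith) (by linarith : 1 - r ≤ 1)
        linarith
      have hsqrt := log_sqrt_bound (x := 1 - r) (by linarith)
      have hpowk : ∀ k : ℕ, 1 / r ^ k ≤ 2 ^ k := by
        intro k
        rw [div_le_iff₀ (by positivity)]
        calc (1:ℝ) = 2 ^ k * (1/2) ^ k := by rw [← mul_pow]; norm_num
        _ ≤ 2 ^ k * r ^ k :=
            mul_le_mul_of_nonneg_left (pow_le_pow_left₀ (by norm_num) hhalf k) (by positivity)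
      set A := ‖(deriv f z)‖ with hA
      set F := ‖(f z)‖ with hF
      have hA0 : 0 ≤ A := norm_nonneg _
      have hF0 : 0 ≤ F := norm_nonneg _
      have e4 : (1 - r ^ 2) * F ≤ 2 * (1 - r) * C + 4 * M * Real.sqrt (1 - r) := by
        have e41 : (1 - r ^ 2) * F ≤ (1 - r ^ 2) * (C + M * (-Real.log (1 - r))) :=
          mul_le_mul_of_nonneg_left hgrow hs0
        have hx0 : 0 ≤ (1 - r) * (-Real.log (1 - r)) := mul_nonneg (by linarith) hL0
        have e45 : (1 + r) * ((1 - r) * C) ≤ 2 * ((1 - r) * C) :=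
          mul_le_mul_of_nonneg_right (by linarith) (mul_nonneg (by linarith) hC0)
        have e46 : (1 + r) * ((1 - r) * (-Real.log (1 - r))) ≤ 2 * (2 * Real.sqrt (1 - r)) := by
          calc (1 + r) * ((1 - r) * (-Real.log (1 - r)))
              ≤ 2 * ((1 - r) * (-Real.log (1 - r))) := mul_le_mul_of_nonneg_right (by linarith) hx0
          _ ≤ 2 * (2 * Real.sqrt (1 - r)) := by linarith [hsqrt]
        have e47 : M * ((1 + r) * ((1 - r) * (-Real.log (1 - r)))) ≤
            M * (2 * (2 * Real.sqrt (1 - r))) := mul_le_mul_of_nonneg_left e46 hM0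
        calc (1 - r ^ 2) * F ≤ (1 - r ^ 2) * (C + M * (-Real.log (1 - r))) := e41
        _ = (1 + r) * ((1 - r) * C) + M * ((1 + r) * ((1 - r) * (-Real.log (1 - r)))) := by ring
        _ ≤ 2 * ((1 - r) * C) + M * (2 * (2 * Real.sqrt (1 - r))) := add_le_add e45 e47
        _ = 2 * (1 - r) * C + 4 * M * Real.sqrt (1 - r) := by ring
      calc (1 - r ^ 2) * ‖(deriv g z)‖
          ≤ (1 - r ^ 2) * (A / r ^ (n+1) + (n+1) * F / r ^ (n+2)) :=
            mul_le_mul_of_nonneg_left hde hs0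
      _ = ((1 - r ^ 2) * A) * (1 / r ^ (n+1)) + ((n:ℝ)+1) * ((1 - r ^ 2) * F) * (1 / r ^ (n+2)) := by
            ring
      _ ≤ ((1 - r ^ 2) * A) * 2 ^ (n+1) + ((n:ℝ)+1) * ((1 - r ^ 2) * F) * 2 ^ (n+2) := by
            apply add_le_add
            · exact mul_le_mul_of_nonneg_left (hpowk (n+1)) (mul_nonneg hs0 hA0)
            · exact mul_le_mul_of_nonneg_left (hpowk (n+2))
                (mul_nonneg (by positivity) (mul_nonneg hs0 hF0))
      _ ≤ 2 ^ (n+1) * ((1 - r ^ 2) * A)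
            + ((n:ℝ)+1) * 2 ^ (n+2) * (2 * (1 - r) * C + 4 * M * Real.sqrt (1 - r)) := by
            have e5 := mul_le_mul_of_nonneg_left e4
              (show (0:ℝ) ≤ ((n:ℝ)+1) * 2 ^ (n+2) by positivity)
            nlinarith [e5]
    refine ⟨g, ⟨hgd, ?_, ?_⟩, heq⟩
    · -- BddAbove
      have hcont : ContinuousOn (deriv g) (closedBall (0:ℂ) (1/2)) :=
        (((hgd.analyticOnNhd isOpen_ball).deriv).continuousOn).mono
          (closedBall_subset_ball (by norm_num))
      obtain ⟨K, hK⟩ := (isCompact_closedBall (0:ℂ) (1/2)).exists_bound_of_continuousOn hcont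
      refine ⟨max K (2 ^ (n+1) * M + ((n:ℝ)+1) * 2 ^ (n+2) * (2 * C + 4 * M)), ?_⟩
      rintro x ⟨z, hz, rfl⟩
      change (1 - ‖z‖ ^ 2) * ‖(deriv g z)‖ ≤ _
      have hr1 : ‖z‖ < 1 := mem_ball_zero_iff.1 hz
      have hrnn : 0 ≤ ‖z‖ := norm_nonneg z
      rcases le_or_gt (‖z‖) (1/2) with hle | hgt
      · refine le_max_iff.2 (Or.inl ?_)
        have h1 := hK z (by simpa [mem_closedBall, Complex.dist_eq] using hle)
        have h2 : (1 - ‖z‖ ^ 2) * ‖(deriv g z)‖ ≤ ‖(deriv g z)‖ := by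
          nlinarith [norm_nonneg (deriv g z)]
        linarith
      · refine le_max_iff.2 (Or.inr ?_)
        have h1 := hkey z hz hgt.le
        have h2 : (1 - ‖z‖ ^ 2) * ‖(deriv f z)‖ ≤ M := hM z hz
        have h3 : Real.sqrt (1 - ‖z‖) ≤ 1 := by
          calc Real.sqrt (1 - ‖z‖) ≤ Real.sqrt 1 := Real.sqrt_le_sqrt (by linarith)
          _ = 1 := Real.sqrt_one
        have h4 : 0 ≤ Real.sqrt (1 - ‖z‖) := Real.sqrt_nonneg _
        have e1 : (2:ℝ) ^ (n+1) * ((1 - ‖z‖ ^ 2) * ‖(deriv f z)‖) ≤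
            2 ^ (n+1) * M := mul_le_mul_of_nonneg_left h2 (by positivity)
        have e2 : 2 * (1 - ‖z‖) * C + 4 * M * Real.sqrt (1 - ‖z‖) ≤
            2 * C + 4 * M := by
          have t1 : 0 ≤ ‖z‖ * C := mul_nonneg hrnn hC0
          have t2 : M * Real.sqrt (1 - ‖z‖) ≤ M * 1 :=
            mul_le_mul_of_nonneg_left h3 hM0
          nlinarith
        have e3 : ((n:ℝ)+1) * 2 ^ (n+2) *
            (2 * (1 - ‖z‖) * C + 4 * M * Real.sqrt (1 - ‖z‖)) ≤
            ((n:ℝ)+1) * 2 ^ (n+2) * (2 * C + 4 * M) :=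
          mul_le_mul_of_nonneg_left e2 (by positivity)
        linarith [h1, e1, e3]
    · -- decay
      have hIoo : ∀ᶠ z : ℂ in comap (fun z : ℂ => ‖z‖) (𝓝[<] (1:ℝ)),
          ‖z‖ ∈ Set.Ioo (1/2 : ℝ) 1 :=
        preimage_mem_comap (Ioo_mem_nhdsLT_of_mem (by norm_num : (1:ℝ) ∈ Set.Ioc (1/2:ℝ) 1))
      have habs : Tendsto (fun z : ℂ => ‖z‖)
          (comap (fun z : ℂ => ‖z‖) (𝓝[<] (1:ℝ))) (𝓝 1) :=
        tendsto_comap.mono_right nhdsWithin_le_nhds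
      have hT1 : Tendsto (fun z : ℂ =>
          (2:ℝ) ^ (n+1) * ((1 - ‖z‖ ^ 2) * ‖(deriv f z)‖))
          (comap (fun z : ℂ => ‖z‖) (𝓝[<] (1:ℝ))) (𝓝 0) := by
        simpa using hf.2.2.const_mul ((2:ℝ) ^ (n+1))
      have hρ : Continuous (fun r : ℝ =>
          ((n:ℝ)+1) * 2 ^ (n+2) * (2 * (1 - r) * C + 4 * M * Real.sqrt (1 - r))) := by
        fun_prop
      have hT2 : Tendsto (fun z : ℂ => ((n:ℝ)+1) * 2 ^ (n+2) *
          (2 * (1 - ‖z‖) * C + 4 * M * Real.sqrt (1 - ‖z‖)))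
          (comap (fun z : ℂ => ‖z‖) (𝓝[<] (1:ℝ))) (𝓝 0) := by
        have := (hρ.tendsto 1).comp habs
        simpa [Function.comp_def] using this
      have hsum := hT1.add hT2
      rw [add_zero] at hsum
      apply squeeze_zero'
      · filter_upwards [hIoo] with z hz
        have h5 : ‖z‖ < 1 := hz.2
        have h6 : 0 ≤ ‖z‖ := norm_nonneg z
        exact mul_nonneg (by nlinarith) (norm_nonneg _)
      · filter_upwards [hIoo] with z hz
        exact hkey z (mem_ball_zero_iff.2 hz.2) hz.1.le
      · exact hsum
  · rintro ⟨g, ⟨hgd, -, -⟩, heq⟩ k hk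
    have hga : AnalyticAt ℂ g 0 := (hgd.analyticOnNhd isOpen_ball) 0 (mem_ball_self one_pos)
    have hfe : f =ᶠ[𝓝 (0:ℂ)] fun z => z ^ (n+1) * g z :=
      eventually_of_mem (ball_mem_nhds _ one_pos) heq
    rw [hfe.iteratedDeriv_eq k]
    exact (iter_pow_mul (n+1) g hga).1 k hk
end

section
/- Let λ ∈ ℂ and let m ∈ ℕ satisfy m > Im(λ). Let g : ℂ → ℂ be holomorphic on the open unit disc D. Then the function f defined on D by f(z) = i zᵐ ∫₀¹ t^{m + iλ − 1} g(tz) dt (the integral converging since Re(m + iλ − 1) = m − Im(λ) − 1 > −1) is holomorphic on D and satisfies λ f(z) − i z f′(z) = zᵐ g(z) for all z ∈ D; that is, f solves the resolvent equation (λ − Γ_{0,1}) f = h for h(z) = zᵐ g(z). -/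
open Complex Metric Filter Topology intervalIntegral MeasureTheory

namespace ResolventAux

lemma meas_aux (c : ℂ) {φ : ℂ → ℂ} (hφ : ContinuousOn φ (ball (0:ℂ) 1))
    {x : ℂ} (hx : ‖x‖ < 1) :
    AEStronglyMeasurable (fun t : ℝ => (t:ℂ) ^ c * φ ((t:ℂ) * x))
      (volume.restrict (Set.Ioc (0:ℝ) 1)) := by
  apply ContinuousOn.aestronglyMeasurable _ measurableSet_Ioc
  intro t ht
  have h1 : ContinuousWithinAt (fun t : ℝ => (t:ℂ) ^ c) (Set.Ioc 0 1) t :=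
    (Complex.continuousAt_ofReal_cpow_const t c (Or.inr (ne_of_gt ht.1))).continuousWithinAt
  have h2 : ContinuousWithinAt (fun t : ℝ => φ ((t:ℂ) * x)) (Set.Ioc 0 1) t := by
    refine (hφ.comp ((Complex.continuous_ofReal.mul continuous_const).continuousOn) ?_) t ht
    intro s hs
    rw [mem_ball_zero_iff]
    calc ‖(s:ℂ) * x‖ = |s| * ‖x‖ := by
          rw [norm_mul, Complex.norm_real, Real.norm_eq_abs]
      _ ≤ 1 * ‖x‖ := by
          apply mul_le_mul_of_nonneg_right _ (norm_nonneg x)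
          rw [abs_le]; exact ⟨by linarith [hs.1.le], hs.2⟩
      _ < 1 := by rw [one_mul]; exact hx
  exact h1.mul h2

lemma key (lam : ℂ) (m : ℕ) (hm : lam.im < (m : ℝ)) (g : ℂ → ℂ)
    (hg : DifferentiableOn ℂ g (ball (0:ℂ) 1)) {z : ℂ} (hz : z ∈ ball (0:ℂ) 1) :
    HasDerivAt (fun w : ℂ => ∫ t in (0:ℝ)..1, (t:ℂ) ^ ((m:ℂ) + I*lam - 1) * g ((t:ℂ)*w))
      (∫ t in (0:ℝ)..1, (t:ℂ) ^ ((m:ℂ) + I*lam) * deriv g ((t:ℂ)*z)) z ∧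
    ((m:ℂ) + I*lam) * (∫ t in (0:ℝ)..1, (t:ℂ) ^ ((m:ℂ) + I*lam - 1) * g ((t:ℂ)*z))
      + z * (∫ t in (0:ℝ)..1, (t:ℂ) ^ ((m:ℂ) + I*lam) * deriv g ((t:ℂ)*z)) = g z := by
  set a : ℂ := (m:ℂ) + I*lam - 1 with ha
  have hexp : (m:ℂ) + I*lam = a + 1 := by rw [ha]; ring
  have ha_re : a.re = (m:ℝ) - lam.im - 1 := by
    simp [ha, Complex.add_re, Complex.sub_re, Complex.mul_re]; ring
  have ha1_re : (a+1).re = (m:ℝ) - lam.im := by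
    rw [Complex.add_re, ha_re, Complex.one_re]; ring
  have har : (-1:ℝ) < a.re := by rw [ha_re]; linarith
  have hpos : 0 < (a+1).re := by rw [ha1_re]; linarith
  have ha1ne : a + 1 ≠ 0 := by
    intro h; rw [h] at hpos; simp at hpos
  have hane : a ≠ -1 := by
    intro h; apply ha1ne; rw [h]; ring
  have hz1 : ‖z‖ < 1 := mem_ball_zero_iff.mp hz
  set r : ℝ := (1 + ‖z‖)/2 with hr
  set ε : ℝ := (1 - ‖z‖)/4 with hε
  have hεpos : 0 < ε := by rw [hε]; linarith
  have hr1 : r < 1 := by rw [hr]; linarith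
  have hr0 : 0 ≤ r := by rw [hr]; positivity
  have hcb : closedBall (0:ℂ) r ⊆ ball (0:ℂ) 1 := closedBall_subset_ball hr1
  have hgc : ContinuousOn g (ball (0:ℂ) 1) := hg.continuousOn
  have hdc : ContinuousOn (deriv g) (ball (0:ℂ) 1) :=
    ((hg.analyticOnNhd isOpen_ball).deriv).continuousOn
  obtain ⟨C, hC⟩ := (isCompact_closedBall (0:ℂ) r).exists_bound_of_continuousOn (hdc.mono hcb)
  have hC0 : 0 ≤ C := le_trans (norm_nonneg _) (hC 0 (mem_closedBall_self hr0))
  have hgd : ∀ w ∈ ball (0:ℂ) 1, HasDerivAt g (deriv g w) w := fun w hw =>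
    (hg.differentiableAt (isOpen_ball.mem_nhds hw)).hasDerivAt
  have hIoc : Set.uIoc (0:ℝ) 1 = Set.Ioc (0:ℝ) 1 := Set.uIoc_of_le zero_le_one
  -- membership facts
  have hmem1 : ∀ t : ℝ, t ∈ Set.Ioc (0:ℝ) 1 → ∀ x : ℂ, ‖x‖ < 1 → (t:ℂ) * x ∈ ball (0:ℂ) 1 := by
    intro t ht x hx
    rw [mem_ball_zero_iff]
    calc ‖(t:ℂ) * x‖ = |t| * ‖x‖ := by rw [norm_mul, Complex.norm_real, Real.norm_eq_abs]
      _ ≤ 1 * ‖x‖ := mul_le_mul_of_nonneg_right (abs_le.mpr ⟨by linarith [ht.1.le], ht.2⟩)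
          (norm_nonneg x)
      _ < 1 := by rw [one_mul]; exact hx
  have hmemr : ∀ t : ℝ, t ∈ Set.Ioc (0:ℝ) 1 → ∀ x : ℂ, ‖x‖ ≤ r → (t:ℂ) * x ∈ closedBall (0:ℂ) r := by
    intro t ht x hx
    rw [mem_closedBall_zero_iff]
    calc ‖(t:ℂ) * x‖ = |t| * ‖x‖ := by rw [norm_mul, Complex.norm_real, Real.norm_eq_abs]
      _ ≤ 1 * ‖x‖ := mul_le_mul_of_nonneg_right (abs_le.mpr ⟨by linarith [ht.1.le], ht.2⟩)
          (norm_nonneg x)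
      _ ≤ r := by rw [one_mul]; exact hx
  have hball : ∀ x ∈ ball z ε, ‖x‖ ≤ r := by
    intro x hx
    rw [mem_ball, dist_eq_norm] at hx
    calc ‖x‖ = ‖(x - z) + z‖ := by ring_nf
      _ ≤ ‖x - z‖ + ‖z‖ := norm_add_le _ _
      _ ≤ r := by rw [hε] at hx; rw [hr]; linarith
  have hnorm_cpow : ∀ (t : ℝ), 0 < t → ∀ c : ℂ, ‖(t:ℂ) ^ c‖ = t ^ c.re := by
    intro t ht c
    rw [Complex.norm_cpow_eq_rpow_re_of_pos ht]
  -- integrability of the base integrand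
  obtain ⟨M, hM⟩ := (isCompact_closedBall (0:ℂ) r).exists_bound_of_continuousOn (hgc.mono hcb)
  have hFint : IntervalIntegrable (fun t : ℝ => (t:ℂ) ^ a * g ((t:ℂ) * z)) volume 0 1 := by
    apply IntervalIntegrable.mono_fun' (g := fun t : ℝ => t ^ a.re * M)
      ((intervalIntegrable_rpow' har).mul_const M)
    · rw [hIoc]; exact meas_aux a hgc hz1
    · rw [Filter.EventuallyLE, hIoc]
      filter_upwards [ae_restrict_mem measurableSet_Ioc] with t ht
      rw [norm_mul, hnorm_cpow t ht.1]
      apply mul_le_mul_of_nonneg_left _ (Real.rpow_nonneg ht.1.le _)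
      exact hM _ (hmemr t ht z (by rw [hr]; linarith))
  -- the dominated-convergence derivative theorem
  obtain ⟨hGint, hF'⟩ :=
    intervalIntegral.hasDerivAt_integral_of_dominated_loc_of_deriv_le
      (μ := volume) (a := (0:ℝ)) (b := 1)
      (F := fun (x : ℂ) (t : ℝ) => (t:ℂ) ^ a * g ((t:ℂ) * x))
      (F' := fun (x : ℂ) (t : ℝ) => (t:ℂ) ^ (a+1) * deriv g ((t:ℂ) * x))
      (x₀ := z) (bound := fun t : ℝ => t ^ (a+1).re * C) (s := ball z ε) (ball_mem_nhds z hεpos)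
      (by filter_upwards [isOpen_ball.mem_nhds hz] with x hx
          rw [hIoc]; exact meas_aux a hgc (mem_ball_zero_iff.mp hx))
      hFint
      (by rw [hIoc]; exact meas_aux (a+1) hdc hz1)
      (by refine Eventually.of_forall fun t ht x hx => ?_
          rw [hIoc] at ht
          rw [norm_mul, hnorm_cpow t ht.1]
          apply mul_le_mul_of_nonneg_left _ (Real.rpow_nonneg ht.1.le _)
          exact hC _ (hmemr t ht x (hball x hx)))
      ((intervalIntegrable_rpow' (by linarith)).mul_const C)
      (by refine Eventually.of_forall fun t ht x hx => ?_
          rw [hIoc] at ht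
          have hx1 : ‖x‖ < 1 := lt_of_le_of_lt (hball x hx) hr1
          have h0 : HasDerivAt (fun y : ℂ => (t:ℂ) * y) (t:ℂ) x := by
            simpa using (hasDerivAt_id x).const_mul (t:ℂ)
          have h1 : HasDerivAt (fun y : ℂ => g ((t:ℂ) * y)) (deriv g ((t:ℂ)*x) * (t:ℂ)) x :=
            (hgd _ (hmem1 t ht x hx1)).comp x h0
          have h2 := h1.const_mul ((t:ℂ) ^ a)
          refine h2.congr_deriv ?_
          beta_reduce
          rw [Complex.cpow_add _ _ (Complex.ofReal_ne_zero.mpr (ne_of_gt ht.1)), Complex.cpow_one]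
          ring)
  rw [hexp]
  refine ⟨hF', ?_⟩
  -- FTC part
  have hψint1 : IntervalIntegrable
      (fun t : ℝ => (a+1) * ((t:ℂ) ^ a * g ((t:ℂ)*z))) volume 0 1 := hFint.const_mul _
  have hψint2 : IntervalIntegrable
      (fun t : ℝ => z * ((t:ℂ) ^ (a+1) * deriv g ((t:ℂ)*z))) volume 0 1 := hGint.const_mul _
  have hcont : ContinuousOn (fun t : ℝ => (t:ℂ) ^ (a+1) * g ((t:ℂ)*z)) (Set.Icc 0 1) := by
    intro t ht
    apply ContinuousWithinAt.mul
    · exact (Complex.continuousAt_ofReal_cpow_const t (a+1) (Or.inl hpos)).continuousWithinAt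
    · refine (hgc.comp ((Complex.continuous_ofReal.mul continuous_const).continuousOn) ?_) t ht
      intro s hs
      rw [mem_ball_zero_iff]
      calc ‖(s:ℂ) * z‖ = |s| * ‖z‖ := by rw [norm_mul, Complex.norm_real, Real.norm_eq_abs]
        _ ≤ 1 * ‖z‖ := mul_le_mul_of_nonneg_right (abs_le.mpr ⟨by linarith [hs.1], hs.2⟩)
            (norm_nonneg z)
        _ < 1 := by rw [one_mul]; exact hz1
  have hderiv : ∀ t ∈ Set.Ioo (0:ℝ) 1, HasDerivAt (fun t : ℝ => (t:ℂ) ^ (a+1) * g ((t:ℂ)*z))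
      ((a+1) * ((t:ℂ) ^ a * g ((t:ℂ)*z)) + z * ((t:ℂ) ^ (a+1) * deriv g ((t:ℂ)*z))) t := by
    intro t ht
    have h1 : HasDerivAt (fun y : ℝ => (y:ℂ) ^ (a+1)) ((a+1) * (t:ℂ) ^ a) t := by
      have h := (hasDerivAt_ofReal_cpow_const' (ne_of_gt ht.1) hane).const_mul (a+1)
      have heq : (fun y : ℝ => (a+1) * ((y:ℂ) ^ (a+1) / (a+1))) = fun y : ℝ => (y:ℂ) ^ (a+1) := by
        funext y; field_simp
      rwa [heq] at h
    have hc : HasDerivAt (fun w : ℂ => g (w * z)) (deriv g ((t:ℂ)*z) * z) (t:ℂ) := by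
      have hmul : HasDerivAt (fun w : ℂ => w * z) z (t:ℂ) := by
        simpa using (hasDerivAt_id ((t:ℂ))).mul_const z
      exact HasDerivAt.comp (t:ℂ) (hgd _ (hmem1 t ⟨ht.1, ht.2.le⟩ z hz1)) hmul
    have h2 : HasDerivAt (fun y : ℝ => g ((y:ℂ) * z)) (deriv g ((t:ℂ)*z) * z) t :=
      hc.comp_ofReal
    refine (h1.mul h2).congr_deriv ?_
    ring
  have hftc := intervalIntegral.integral_eq_sub_of_hasDerivAt_of_le zero_le_one hcont hderiv
    (hψint1.add hψint2)
  rw [intervalIntegral.integral_add hψint1 hψint2, intervalIntegral.integral_const_mul,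
    intervalIntegral.integral_const_mul] at hftc
  rw [hftc]
  norm_num [Complex.one_cpow, Complex.zero_cpow ha1ne]


lemma hasDerivAt_f (lam : ℂ) (m : ℕ) (hm : lam.im < (m : ℝ)) (g : ℂ → ℂ)
    (hg : DifferentiableOn ℂ g (ball (0:ℂ) 1)) {z : ℂ} (hz : z ∈ ball (0:ℂ) 1) :
    HasDerivAt (fun w : ℂ => I * w ^ m *
        ∫ t in (0:ℝ)..1, (t : ℂ) ^ ((m : ℂ) + I * lam - 1) * g ((t : ℂ) * w))
      (I * (((m:ℕ):ℂ) * z ^ (m-1) *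
          (∫ t in (0:ℝ)..1, (t:ℂ) ^ ((m:ℂ) + I*lam - 1) * g ((t:ℂ)*z))
        + z ^ m * ∫ t in (0:ℝ)..1, (t:ℂ) ^ ((m:ℂ) + I*lam) * deriv g ((t:ℂ)*z))) z := by
  have h1 := (key lam m hm g hg hz).1
  have h2 := ((hasDerivAt_pow m z).mul h1).const_mul I
  simpa [mul_assoc] using h2

end ResolventAux

open ResolventAux in
/-- The resolvent formula for the generator `Γ_{0,1} f = i z f'`: for `m > Im λ` and
`h(z) = zᵐ g(z)` with `g` holomorphic on the disc, the function
`f(z) = i zᵐ ∫₀¹ t^{m+iλ−1} g(tz) dt` is holomorphic on the disc and solves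
`(λ − Γ_{0,1}) f = h`. -/
theorem resolvent_formula (lam : ℂ) (m : ℕ) (hm : lam.im < (m : ℝ)) (g : ℂ → ℂ)
    (hg : DifferentiableOn ℂ g (ball (0:ℂ) 1)) :
    DifferentiableOn ℂ
      (fun z : ℂ => I * z ^ m *
        ∫ t in (0:ℝ)..1, (t : ℂ) ^ ((m : ℂ) + I * lam - 1) * g ((t : ℂ) * z))
      (ball (0:ℂ) 1) ∧
    ∀ z ∈ ball (0:ℂ) 1,
      lam * (I * z ^ m *
          ∫ t in (0:ℝ)..1, (t : ℂ) ^ ((m : ℂ) + I * lam - 1) * g ((t : ℂ) * z)) -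
        I * z * deriv (fun w : ℂ => I * w ^ m *
          ∫ t in (0:ℝ)..1, (t : ℂ) ^ ((m : ℂ) + I * lam - 1) * g ((t : ℂ) * w)) z =
      z ^ m * g z := by
  constructor
  · exact fun z hz => (hasDerivAt_f lam m hm g hg hz).differentiableAt.differentiableWithinAt
  · intro z hz
    rw [(hasDerivAt_f lam m hm g hg hz).deriv]
    have hkey := (key lam m hm g hg hz).2
    set A := ∫ t in (0:ℝ)..1, (t:ℂ) ^ ((m:ℂ) + I*lam - 1) * g ((t:ℂ)*z) with hA
    set B := ∫ t in (0:ℝ)..1, (t:ℂ) ^ ((m:ℂ) + I*lam) * deriv g ((t:ℂ)*z) with hB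
    have hzz : z * ((m:ℂ) * z ^ (m-1)) = (m:ℂ) * z ^ m := by
      cases m with
      | zero => simp
      | succ n => push_cast; ring
    have hI : I * I = -1 := Complex.I_mul_I
    linear_combination z^m * hkey + A * hzz - (z*((m:ℂ)*z^(m-1))*A + z*z^m*B) * hI
end

section
/- Let γ ∈ ℝ and n ∈ ℕ, and define f(z) = (z − i)ⁿ · (z + i)^{−(n + 2γ)} for z in the open unit disc D, where (z + i)^{−(n+2γ)} is the principal complex power (well defined and holomorphic since Im(z + i) > 0 for z ∈ D). Then f is holomorphic on D and satisfies −2γ z f(z) − (1 + z²) f′(z) = −2(γ + n) i · f(z) for all z ∈ D; that is, f is an eigenfunction of the generator Δ h = −2γ z h − (1 + z²) h′ with eigenvalue −2(γ + n)i. -/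
open Complex Metric Filter Topology

lemma aux_pow_eig (n : ℕ) (w : ℂ) : (n:ℂ) * w^(n-1) * w = (n:ℂ) * w^n := by
  cases n with
  | zero => simp
  | succ m => rw [Nat.succ_sub_one, pow_succ]; ring

/-- The function `f(z) = (z−i)ⁿ (z+i)^{−(n+2γ)}` is holomorphic on the unit disc and is
an eigenfunction of the generator `Δ h = −2γ z h − (1+z²) h'` with eigenvalue
`−2(γ+n)i`. -/
theorem eigenfunction_Delta (γ : ℝ) (n : ℕ) :
    DifferentiableOn ℂ
      (fun z : ℂ => (z - I) ^ n * (z + I) ^ (-((n : ℂ) + 2 * (γ : ℂ)))) (ball (0:ℂ) 1) ∧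
    ∀ z ∈ ball (0:ℂ) 1,
      -2 * (γ : ℂ) * z * ((z - I) ^ n * (z + I) ^ (-((n : ℂ) + 2 * (γ : ℂ)))) -
          (1 + z ^ 2) *
            deriv (fun w : ℂ => (w - I) ^ n * (w + I) ^ (-((n : ℂ) + 2 * (γ : ℂ)))) z =
        -2 * ((γ : ℂ) + (n : ℂ)) * I *
          ((z - I) ^ n * (z + I) ^ (-((n : ℂ) + 2 * (γ : ℂ)))) := by
  set s : ℂ := -((n : ℂ) + 2 * (γ : ℂ)) with hs
  have key : ∀ z ∈ ball (0:ℂ) 1,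
      HasDerivAt (fun w : ℂ => (w - I) ^ n * (w + I) ^ s)
        ((n:ℂ) * (z - I)^(n-1) * (z + I) ^ s + (z - I)^n * (s * (z + I) ^ (s - 1))) z := by
    intro z hz
    simp only [mem_ball, dist_zero_right] at hz
    have him : 0 < (z + I).im := by
      have h1 := abs_im_le_norm z
      have : -z.im ≤ ‖z‖ := (abs_le.mp h1).1 |>.trans_eq rfl |> (neg_le.mp ·) |> fun h => by
        linarith [(abs_le.mp h1).1]
      simp only [Complex.add_im, Complex.I_im] at *
      linarith [(abs_le.mp h1).1]
    have h1 : HasDerivAt (fun w : ℂ => (w - I) ^ n) ((n:ℂ) * (z - I)^(n-1)) z := by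
      simpa using ((hasDerivAt_id z).sub_const I).fun_pow n
    have h2 : HasDerivAt (fun w : ℂ => (w + I) ^ s) (s * (z + I) ^ (s - 1)) z := by
      simpa using ((hasDerivAt_id z).add_const I).cpow_const (Or.inr him.ne')
    simpa using h1.fun_mul h2
  constructor
  · intro z hz
    exact ((key z hz).differentiableAt).differentiableWithinAt
  · intro z hz
    rw [(key z hz).deriv]
    have hz' := hz
    simp only [mem_ball, dist_zero_right] at hz'
    have him : 0 < (z + I).im := by
      have h1 := abs_im_le_norm z
      simp only [Complex.add_im, Complex.I_im] at *
      linarith [(abs_le.mp h1).1]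
    have hne : z + I ≠ 0 := by
      intro h
      rw [h] at him; simp at him
    have hne2 : z - I ≠ 0 := by
      intro h
      have : z = I := by linear_combination h
      rw [this] at hz'; simp at hz'
    have hsub : (z + I) ^ (s - 1) = (z + I) ^ s / (z + I) := by
      rw [cpow_sub _ _ hne, cpow_one]
    have hfac : (1 : ℂ) + z ^ 2 = (z - I) * (z + I) := by
      have h2 : (I:ℂ)^2 = -1 := Complex.I_sq
      linear_combination h2
    have haux : (n:ℂ) * (z - I)^(n-1) = (n:ℂ) * (z - I)^n / (z - I) := by
      rw [eq_div_iff hne2]; exact aux_pow_eig n (z - I)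
    rw [hsub, hfac, haux, hs]
    field_simp
    ring
end

section
/- Let γ ∈ ℝ, μ ∈ ℂ, and set A = i(μ + 2iγ)/2. Let h : ℂ → ℂ be holomorphic on the open unit disc D. Define F on D by F(z) = (z − i)^A · (z + i)^{−A − 2γ} · z · ∫₀¹ (sz − i)^{−A − 1} (sz + i)^{A + 2γ − 1} h(sz) ds, where all powers are principal complex powers (well defined since for z ∈ D and s ∈ [0,1], Im(sz − i) < 0 and Im(sz + i) > 0, so the bases avoid (−∞, 0]). Then F is holomorphic on D and satisfies μ F(z) + 2γ z F(z) + (1 + z²) F′(z) = h(z) for all z ∈ D; that is, F solves the resolvent equation (μ − Δ) F = h for the generator Δ h = −2γ z h − (1 + z²) h′. -/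
open Complex Metric Filter Topology

noncomputable def resolventDelta (γ : ℝ) (μ : ℂ) (h : ℂ → ℂ) : ℂ → ℂ :=
  fun z =>
    (z - I) ^ (I * (μ + 2 * I * (γ : ℂ)) / 2) *
      (z + I) ^ (-(I * (μ + 2 * I * (γ : ℂ)) / 2) - 2 * (γ : ℂ)) * z *
      ∫ s in (0:ℝ)..1,
        ((s : ℂ) * z - I) ^ (-(I * (μ + 2 * I * (γ : ℂ)) / 2) - 1) *
          ((s : ℂ) * z + I) ^ ((I * (μ + 2 * I * (γ : ℂ)) / 2) + 2 * (γ : ℂ) - 1) *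
          h ((s : ℂ) * z)


/-! ### Auxiliary lemmas -/

lemma cpow_helper1 (w a : ℂ) (hw : w ≠ 0) : w ^ (-a - 1) = (w ^ a)⁻¹ * w⁻¹ := by
  rw [show -a - 1 = -a + -1 by ring, Complex.cpow_add _ _ hw, Complex.cpow_neg,
    Complex.cpow_neg, Complex.cpow_one]

lemma cpow_helper2 (w a : ℂ) (hw : w ≠ 0) : w ^ (a - 1) = w ^ a * w⁻¹ := by
  rw [Complex.cpow_sub _ _ hw, Complex.cpow_one, div_eq_mul_inv]

lemma cpow_helper3 (w a b : ℂ) : w ^ (-a - b) = (w ^ (a + b))⁻¹ := by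
  rw [show -a - b = -(a + b) by ring, Complex.cpow_neg]

/-- The primitive `z ↦ z ∫₀¹ g(sz) ds` of a holomorphic function on the unit disc. -/
lemma hasDerivAt_primitive {g : ℂ → ℂ} (hg : DifferentiableOn ℂ g (ball (0:ℂ) 1))
    {z₀ : ℂ} (hz₀ : z₀ ∈ ball (0:ℂ) 1) :
    HasDerivAt (fun z : ℂ => z * ∫ s in (0:ℝ)..1, g ((s:ℂ) * z)) (g z₀) z₀ := by
  rw [mem_ball, dist_zero_right] at hz₀
  set r : ℝ := (‖z₀‖ + 1) / 2 with hrdef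
  have hz0 : (0:ℝ) ≤ ‖z₀‖ := norm_nonneg _
  have hzr : ‖z₀‖ < r := by rw [hrdef]; linarith
  have hr1 : r < 1 := by rw [hrdef]; linarith
  have hrpos : (0:ℝ) < r := by linarith
  have hsub : closedBall (0:ℂ) r ⊆ ball (0:ℂ) 1 := closedBall_subset_ball hr1
  have hIsub : Set.uIoc (0:ℝ) 1 ⊆ Set.Icc (0:ℝ) 1 := by
    rw [Set.uIoc_of_le zero_le_one]; exact Set.Ioc_subset_Icc_self
  have hmul : ∀ s : ℝ, s ∈ Set.Icc (0:ℝ) 1 → ∀ x : ℂ, ‖x‖ ≤ r →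
      (s:ℂ) * x ∈ closedBall (0:ℂ) r := by
    intro s hs x hx
    rw [mem_closedBall, dist_zero_right, norm_mul, Complex.norm_real]
    calc ‖s‖ * ‖x‖ ≤ 1 * r := by
          apply mul_le_mul _ hx (norm_nonneg _) zero_le_one
          rw [Real.norm_eq_abs, _root_.abs_of_nonneg hs.1]; exact hs.2
      _ = r := one_mul r
  have hgd : ∀ w ∈ ball (0:ℂ) 1, HasDerivAt g (deriv g w) w := fun w hw =>
    (hg.differentiableAt (isOpen_ball.mem_nhds hw)).hasDerivAt
  have hgc : ContinuousOn g (closedBall (0:ℂ) r) := hg.continuousOn.mono hsub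
  have hg'c : ContinuousOn (deriv g) (closedBall (0:ℂ) r) :=
    ((hg.analyticOnNhd isOpen_ball).deriv.continuousOn).mono hsub
  obtain ⟨C₁, hC₁⟩ := (isCompact_closedBall (0:ℂ) r).exists_bound_of_continuousOn hgc
  obtain ⟨C₂, hC₂⟩ := (isCompact_closedBall (0:ℂ) r).exists_bound_of_continuousOn hg'c
  set ε : ℝ := r - ‖z₀‖ with hεdef
  have hε : 0 < ε := by rw [hεdef]; linarith
  have hballr : ∀ x ∈ ball z₀ ε, ‖x‖ ≤ r := by
    intro x hx
    rw [mem_ball, dist_eq_norm] at hx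
    have h1 : ‖x‖ - ‖z₀‖ ≤ ‖x - z₀‖ := norm_sub_norm_le x z₀
    rw [hεdef] at hx; linarith
  -- continuity of integrands
  have hcont : ∀ x : ℂ, ‖x‖ ≤ r → ContinuousOn (fun s : ℝ => x * g ((s:ℂ) * x))
      (Set.Icc (0:ℝ) 1) := by
    intro x hx
    apply ContinuousOn.mul continuousOn_const
    apply ContinuousOn.comp hgc (Continuous.continuousOn (by continuity))
    intro s hs; exact hmul s hs x hx
  have hcont' : ContinuousOn
      (fun s : ℝ => g ((s:ℂ) * z₀) + z₀ * ((s:ℂ) * deriv g ((s:ℂ) * z₀)))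
      (Set.Icc (0:ℝ) 1) := by
    have hin : Continuous (fun s : ℝ => (s:ℂ) * z₀) := by continuity
    have hmaps : Set.MapsTo (fun s : ℝ => (s:ℂ) * z₀) (Set.Icc (0:ℝ) 1)
        (closedBall (0:ℂ) r) := fun s hs => hmul s hs z₀ hzr.le
    exact (ContinuousOn.comp hgc hin.continuousOn hmaps).add
      (continuousOn_const.mul ((Complex.continuous_ofReal.continuousOn).mul
        (ContinuousOn.comp hg'c hin.continuousOn hmaps)))
  -- apply differentiation under the integral sign
  have main := intervalIntegral.hasDerivAt_integral_of_dominated_loc_of_deriv_le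
    (μ := MeasureTheory.volume) (a := (0:ℝ)) (b := 1)
    (F := fun (x : ℂ) (s : ℝ) => x * g ((s:ℂ) * x))
    (F' := fun (x : ℂ) (s : ℝ) => g ((s:ℂ) * x) + x * ((s:ℂ) * deriv g ((s:ℂ) * x)))
    (x₀ := z₀) (bound := fun _ => |C₁| + r * |C₂|) (ball_mem_nhds z₀ hε)
    (by
      filter_upwards [ball_mem_nhds z₀ hε] with x hx
      exact ((hcont x (hballr x hx)).mono hIsub).aestronglyMeasurable measurableSet_uIoc)
    (by
      apply ContinuousOn.intervalIntegrable
      rw [Set.uIcc_of_le zero_le_one]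
      exact hcont z₀ hzr.le)
    ((hcont'.mono hIsub).aestronglyMeasurable measurableSet_uIoc)
    (by
      apply Filter.Eventually.of_forall
      intro t ht x hx
      have htI : t ∈ Set.Icc (0:ℝ) 1 := hIsub ht
      have hxr : ‖x‖ ≤ r := hballr x hx
      have htb : (t:ℂ) * x ∈ closedBall (0:ℂ) r := hmul t htI x hxr
      have h1 : ‖g ((t:ℂ) * x)‖ ≤ |C₁| := (hC₁ _ htb).trans (le_abs_self C₁)
      have h2 : ‖deriv g ((t:ℂ) * x)‖ ≤ |C₂| := (hC₂ _ htb).trans (le_abs_self C₂)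
      have hts : ‖(t:ℂ)‖ ≤ 1 := by
        rw [Complex.norm_real, Real.norm_eq_abs, _root_.abs_of_nonneg htI.1]; exact htI.2
      calc ‖g ((t:ℂ) * x) + x * ((t:ℂ) * deriv g ((t:ℂ) * x))‖
          ≤ ‖g ((t:ℂ) * x)‖ + ‖x‖ * (‖(t:ℂ)‖ * ‖deriv g ((t:ℂ) * x)‖) := by
            refine (norm_add_le _ _).trans ?_
            rw [norm_mul, norm_mul]
        _ ≤ |C₁| + r * (1 * |C₂|) := by
            refine add_le_add h1 (mul_le_mul hxr ?_ (by positivity) hrpos.le)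
            exact mul_le_mul hts h2 (norm_nonneg _) zero_le_one
        _ = |C₁| + r * |C₂| := by ring)
    (intervalIntegrable_const)
    (by
      apply Filter.Eventually.of_forall
      intro t ht x hx
      have htI : t ∈ Set.Icc (0:ℝ) 1 := hIsub ht
      have hxb : (t:ℂ) * x ∈ ball (0:ℂ) 1 := hsub (hmul t htI x (hballr x hx))
      have hinner : HasDerivAt (fun y : ℂ => (t:ℂ) * y) ((t:ℂ)) x := by
        simpa using (hasDerivAt_id x).const_mul (t:ℂ)
      have hcomp : HasDerivAt (fun y : ℂ => g ((t:ℂ) * y)) (deriv g ((t:ℂ) * x) * (t:ℂ)) x :=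
        HasDerivAt.comp x (hgd _ hxb) hinner
      have := (hasDerivAt_id x).mul hcomp
      refine this.congr_deriv ?_
      simp only [id_eq]
      ring)
  obtain ⟨hint, hder⟩ := main
  have hfun : (fun x : ℂ => ∫ t in (0:ℝ)..1, x * g ((t:ℂ) * x))
      = fun x : ℂ => x * ∫ s in (0:ℝ)..1, g ((s:ℂ) * x) := by
    funext x
    exact intervalIntegral.integral_const_mul x _
  rw [hfun] at hder
  have hval : (∫ t in (0:ℝ)..1, (g ((t:ℂ) * z₀) + z₀ * ((t:ℂ) * deriv g ((t:ℂ) * z₀))))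
      = g z₀ := by
    have hFTC := intervalIntegral.integral_eq_sub_of_hasDerivAt
      (f := fun s : ℝ => (s:ℂ) * g ((s:ℂ) * z₀))
      (f' := fun s : ℝ => g ((s:ℂ) * z₀) + z₀ * ((s:ℂ) * deriv g ((s:ℂ) * z₀)))
      (a := (0:ℝ)) (b := 1)
      (by
        intro s hs
        rw [Set.uIcc_of_le zero_le_one] at hs
        have hsb : (s:ℂ) * z₀ ∈ ball (0:ℂ) 1 := hsub (hmul s hs z₀ hzr.le)
        have h2 : HasDerivAt (fun s : ℝ => (s:ℂ)) 1 s := by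
          simpa using (hasDerivAt_id s).ofReal_comp
        have hinner : HasDerivAt (fun s : ℝ => (s:ℂ) * z₀) z₀ s := by
          simpa using h2.mul_const z₀
        have h3 : HasDerivAt (fun s : ℝ => g ((s:ℂ) * z₀))
            (z₀ • deriv g ((s:ℂ) * z₀)) s :=
          HasDerivAt.scomp s (hgd _ hsb) hinner
        have := h2.mul h3
        refine this.congr_deriv ?_
        simp [smul_eq_mul]
        ring)
      hint
    rw [hFTC]
    norm_num
  rw [hval] at hder
  exact hder

/-! ### The building blocks of the resolvent -/

noncomputable def auxg (γ : ℝ) (A : ℂ) (h : ℂ → ℂ) : ℂ → ℂ := fun w =>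
  (w - I) ^ (-A - 1) * (w + I) ^ (A + 2 * (γ:ℂ) - 1) * h w

noncomputable def auxP (γ : ℝ) (A : ℂ) : ℂ → ℂ := fun z =>
  (z - I) ^ A * (z + I) ^ (-A - 2 * (γ:ℂ))

noncomputable def auxG (γ : ℝ) (A : ℂ) (h : ℂ → ℂ) : ℂ → ℂ := fun z =>
  z * ∫ s in (0:ℝ)..1, auxg γ A h ((s:ℂ) * z)

noncomputable def auxF (γ : ℝ) (A : ℂ) (h : ℂ → ℂ) : ℂ → ℂ := fun z =>
  auxP γ A z * auxG γ A h z

lemma resolvent_aux (γ : ℝ) (μ A : ℂ) (hμ : A * 2 = I * μ - 2 * (γ:ℂ)) (h : ℂ → ℂ)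
    (hh : DifferentiableOn ℂ h (ball (0:ℂ) 1)) :
    DifferentiableOn ℂ (auxF γ A h) (ball (0:ℂ) 1) ∧
      ∀ z ∈ ball (0:ℂ) 1,
        μ * auxF γ A h z + 2 * (γ:ℂ) * z * auxF γ A h z +
            (1 + z ^ 2) * deriv (auxF γ A h) z = h z := by
  -- basic facts about points of the disc
  have him : ∀ z ∈ ball (0:ℂ) 1, (z - I).im ≠ 0 ∧ (z + I).im ≠ 0 := by
    intro z hz
    rw [mem_ball, dist_zero_right] at hz
    have h1 : |z.im| < 1 := lt_of_le_of_lt (Complex.abs_im_le_norm z) (by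
      exact hz)
    obtain ⟨hl, hr⟩ := abs_lt.mp h1
    constructor
    · simp only [Complex.sub_im, Complex.I_im]
      intro hc; linarith
    · simp only [Complex.add_im, Complex.I_im]
      intro hc; linarith
  have hne : ∀ z ∈ ball (0:ℂ) 1, (z - I) ≠ 0 ∧ (z + I) ≠ 0 := by
    intro z hz
    obtain ⟨h1, h2⟩ := him z hz
    constructor
    · intro hc; rw [hc] at h1; simp at h1
    · intro hc; rw [hc] at h2; simp at h2
  -- g is holomorphic on the disc
  have hgdiff : DifferentiableOn ℂ (auxg γ A h) (ball (0:ℂ) 1) := by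
    intro z hz
    obtain ⟨h1, h2⟩ := him z hz
    have d1 : DifferentiableAt ℂ (fun z : ℂ => (z - I) ^ (-A - 1)) z :=
      (((hasDerivAt_id z).sub_const I).cpow_const
        (Complex.mem_slitPlane_iff.mpr (Or.inr h1))).differentiableAt
    have d2 : DifferentiableAt ℂ (fun z : ℂ => (z + I) ^ (A + 2 * (γ:ℂ) - 1)) z :=
      (((hasDerivAt_id z).add_const I).cpow_const
        (Complex.mem_slitPlane_iff.mpr (Or.inr h2))).differentiableAt
    have d3 : DifferentiableAt ℂ h z := hh.differentiableAt (isOpen_ball.mem_nhds hz)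
    exact ((d1.mul d2).mul d3).differentiableWithinAt
  -- derivative of G
  have hGd : ∀ z ∈ ball (0:ℂ) 1, HasDerivAt (auxG γ A h) (auxg γ A h z) z := by
    intro z hz
    exact hasDerivAt_primitive hgdiff hz
  -- derivative of P
  have hPd : ∀ z ∈ ball (0:ℂ) 1, HasDerivAt (auxP γ A)
      (A * (z - I) ^ (A - 1) * (z + I) ^ (-A - 2 * (γ:ℂ)) +
        (z - I) ^ A * ((-A - 2 * (γ:ℂ)) * (z + I) ^ (-A - 2 * (γ:ℂ) - 1))) z := by
    intro z hz
    obtain ⟨h1, h2⟩ := him z hz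
    have d1 : HasDerivAt (fun z : ℂ => (z - I) ^ A) (A * (z - I) ^ (A - 1)) z := by
      simpa using ((hasDerivAt_id z).sub_const I).cpow_const
        (Complex.mem_slitPlane_iff.mpr (Or.inr h1))
    have d2 : HasDerivAt (fun z : ℂ => (z + I) ^ (-A - 2 * (γ:ℂ)))
        ((-A - 2 * (γ:ℂ)) * (z + I) ^ (-A - 2 * (γ:ℂ) - 1)) z := by
      simpa using ((hasDerivAt_id z).add_const I).cpow_const
        (Complex.mem_slitPlane_iff.mpr (Or.inr h2))
    exact d1.mul d2
  -- derivative of F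
  have hFd : ∀ z ∈ ball (0:ℂ) 1, HasDerivAt (auxF γ A h)
      ((A * (z - I) ^ (A - 1) * (z + I) ^ (-A - 2 * (γ:ℂ)) +
        (z - I) ^ A * ((-A - 2 * (γ:ℂ)) * (z + I) ^ (-A - 2 * (γ:ℂ) - 1))) * auxG γ A h z +
        auxP γ A z * auxg γ A h z) z := by
    intro z hz
    exact (hPd z hz).mul (hGd z hz)
  constructor
  · exact fun z hz => ((hFd z hz).differentiableAt).differentiableWithinAt
  · intro z hz
    obtain ⟨hne1, hne2⟩ := hne z hz
    have hXne : (z - I) ^ A ≠ 0 := by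
      intro hc
      exact hne1 ((Complex.cpow_eq_zero_iff _ _).mp hc).1
    have hYne : (z + I) ^ (A + 2 * (γ:ℂ)) ≠ 0 := by
      intro hc
      exact hne2 ((Complex.cpow_eq_zero_iff _ _).mp hc).1
    have hz2 : (1 : ℂ) + z ^ 2 = (z - I) * (z + I) := by
      linear_combination Complex.I_sq
    have hbracket : μ + 2 * (γ:ℂ) * z + (A * (z + I) + (-A - 2 * (γ:ℂ)) * (z - I)) = 0 := by
      linear_combination I * hμ + μ * Complex.I_sq
    -- identity (i): (1+z²) P g = h
    have hi : (1 + z ^ 2) * (auxP γ A z * auxg γ A h z) = h z := by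
      rw [hz2]
      simp only [auxP, auxg]
      rw [cpow_helper1 _ A hne1, cpow_helper2 (z + I) (A + 2 * (γ:ℂ)) hne2,
        cpow_helper3 (z + I) A (2 * (γ:ℂ))]
      field_simp
    -- identity (ii): μ P + 2γ z P + (1+z²) P' = 0
    have hP'eq : (1 + z ^ 2) *
        (A * (z - I) ^ (A - 1) * (z + I) ^ (-A - 2 * (γ:ℂ)) +
          (z - I) ^ A * ((-A - 2 * (γ:ℂ)) * (z + I) ^ (-A - 2 * (γ:ℂ) - 1)))
        = (A * (z + I) + (-A - 2 * (γ:ℂ)) * (z - I)) * auxP γ A z := by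
      rw [hz2]
      simp only [auxP]
      rw [cpow_helper2 (z - I) A hne1, cpow_helper2 (z + I) (-A - 2 * (γ:ℂ)) hne2,
        cpow_helper3 (z + I) A (2 * (γ:ℂ))]
      field_simp
    have hii : μ * auxP γ A z + 2 * (γ:ℂ) * z * auxP γ A z +
        (1 + z ^ 2) *
          (A * (z - I) ^ (A - 1) * (z + I) ^ (-A - 2 * (γ:ℂ)) +
            (z - I) ^ A * ((-A - 2 * (γ:ℂ)) * (z + I) ^ (-A - 2 * (γ:ℂ) - 1))) = 0 := by
      rw [hP'eq]
      linear_combination (auxP γ A z) * hbracket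
    rw [(hFd z hz).deriv]
    simp only [auxF]
    linear_combination (auxG γ A h z) * hii + hi

/-! ### Main theorem -/

theorem resolvent_equation_Delta (γ : ℝ) (μ : ℂ) (h : ℂ → ℂ)
    (hh : DifferentiableOn ℂ h (ball (0:ℂ) 1)) :
    DifferentiableOn ℂ (resolventDelta γ μ h) (ball (0:ℂ) 1) ∧
      ∀ z ∈ ball (0:ℂ) 1,
        μ * resolventDelta γ μ h z + 2 * (γ : ℂ) * z * resolventDelta γ μ h z +
            (1 + z ^ 2) * deriv (resolventDelta γ μ h) z = h z := by
  have hμ : (I * (μ + 2 * I * (γ:ℂ)) / 2) * 2 = I * μ - 2 * (γ:ℂ) := by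
    linear_combination (2 * (γ:ℂ)) * Complex.I_sq
  have hFeq : resolventDelta γ μ h = auxF γ (I * (μ + 2 * I * (γ:ℂ)) / 2) h := by
    funext z
    simp only [resolventDelta, auxF, auxP, auxG, auxg]
    ring
  rw [hFeq]
  exact resolvent_aux γ μ _ hμ h hh
end
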